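/- Let A, B, C, D, E, F be any six pairwise non-proportional points of the conic K. Then the Pascal lines of the arrays [[A,B,C],[F,E,D]] and [[A,E,F],[B,C,D]] never coincide: the cross product of the two Pascal vectors is nonzero. -/

import Mathlib

open Matrix

namespace PascalStmt

noncomputable section
set_option maxHeartbeats 1000000

/-- Membership in the conic `K = {y : y₀y₂ = y₁²}`. -/
def OnK (y : Fin 3 → ℂ) : Prop := y 0 * y 2 = y 1 ^ 2

/-- The tangent line to `K` at a point `y` of `K`. -/
def tangentK (y : Fin 3 → ℂ) : Fin 3 → ℂ := ![y 2, -(2 * y 1), y 0]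

/-- First cross-hair point of the array `[[P₁,P₂,P₃],[P₄,P₅,P₆]]`. -/
def chX1 (P₁ P₂ P₃ P₄ P₅ P₆ : Fin 3 → ℂ) : Fin 3 → ℂ := (P₁ ⨯₃ P₅) ⨯₃ (P₂ ⨯₃ P₄)

/-- Second cross-hair point of the array `[[P₁,P₂,P₃],[P₄,P₅,P₆]]`. -/
def chX2 (P₁ P₂ P₃ P₄ P₅ P₆ : Fin 3 → ℂ) : Fin 3 → ℂ := (P₁ ⨯₃ P₆) ⨯₃ (P₃ ⨯₃ P₄)

/-- Third cross-hair point of the array `[[P₁,P₂,P₃],[P₄,P₅,P₆]]`. -/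
def chX3 (P₁ P₂ P₃ P₄ P₅ P₆ : Fin 3 → ℂ) : Fin 3 → ℂ := (P₂ ⨯₃ P₆) ⨯₃ (P₃ ⨯₃ P₅)

/-- The Pascal line vector of the array `[[P₁,P₂,P₃],[P₄,P₅,P₆]]`. -/
def pascalVec (P₁ P₂ P₃ P₄ P₅ P₆ : Fin 3 → ℂ) : Fin 3 → ℂ :=
  chX1 P₁ P₂ P₃ P₄ P₅ P₆ ⨯₃ chX2 P₁ P₂ P₃ P₄ P₅ P₆

/-- Six points, pairwise non-proportional (in particular all nonzero). -/
def PairwiseNonProp (P : Fin 6 → (Fin 3 → ℂ)) : Prop :=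
  ∀ i j, i ≠ j → ∀ c : ℂ, P i ≠ c • P j

def nuv (s t : ℂ) : Fin 3 → ℂ := ![s^2, s*t, t^2]

lemma smul_crossL (c : ℂ) (u v : Fin 3 → ℂ) : (c • u) ⨯₃ v = c • (u ⨯₃ v) := by
  rw [_root_.map_smul, LinearMap.smul_apply]

lemma smul_crossR (c : ℂ) (u v : Fin 3 → ℂ) : u ⨯₃ (c • v) = c • (u ⨯₃ v) :=
  _root_.map_smul _ _ _

lemma pascal_smul (k₁ k₂ k₃ k₄ k₅ k₆ : ℂ) (Q₁ Q₂ Q₃ Q₄ Q₅ Q₆ : Fin 3 → ℂ) :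
    pascalVec (k₁ • Q₁) (k₂ • Q₂) (k₃ • Q₃) (k₄ • Q₄) (k₅ • Q₅) (k₆ • Q₆)
      = (k₁^2 * k₂ * k₃ * k₄^2 * k₅ * k₆) • pascalVec Q₁ Q₂ Q₃ Q₄ Q₅ Q₆ := by
  simp only [pascalVec, chX1, chX2, smul_crossL, smul_crossR, smul_smul]
  congr 1
  ring

lemma cross_dot_cross (a b c d : Fin 3 → ℂ) :
    (a ⨯₃ b) ⬝ᵥ (c ⨯₃ d) = (a ⬝ᵥ c) * (b ⬝ᵥ d) - (a ⬝ᵥ d) * (b ⬝ᵥ c) := by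
  simp only [cross_apply, dotProduct, Fin.sum_univ_three, Matrix.cons_val_zero,
    Matrix.cons_val_one, Matrix.head_cons, Matrix.cons_val_two, Matrix.tail_cons]
  ring

lemma cross_cross (a b c d : Fin 3 → ℂ) :
    (a ⨯₃ b) ⨯₃ (c ⨯₃ d) = (a ⬝ᵥ (b ⨯₃ d)) • c - (a ⬝ᵥ (b ⨯₃ c)) • d := by
  funext i
  fin_cases i <;>
    simp [cross_apply, dotProduct, Fin.sum_univ_three] <;>
    ring

lemma expand_dot (x y z w : ℂ) (p r q s u : Fin 3 → ℂ) :
    ((x • p - y • r) ⨯₃ (z • q - w • s)) ⬝ᵥ u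
      = x*z*(u ⬝ᵥ (p ⨯₃ q)) - x*w*(u ⬝ᵥ (p ⨯₃ s)) - y*z*(u ⬝ᵥ (r ⨯₃ q))
        + y*w*(u ⬝ᵥ (r ⨯₃ s)) := by
  simp [cross_apply, dotProduct, Fin.sum_univ_three]
  ring

lemma triple_nu (a b c d e f : ℂ) :
    nuv a b ⬝ᵥ (nuv c d ⨯₃ nuv e f) = (a*d - c*b)*(a*f - e*b)*(c*f - e*d) := by
  simp [nuv, cross_apply, dotProduct, Fin.sum_univ_three]
  ring

lemma dotL1A (s₁ t₁ s₂ t₂ s₃ t₃ s₄ t₄ s₅ t₅ s₆ t₆ : ℂ) :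
    pascalVec (nuv s₁ t₁) (nuv s₂ t₂) (nuv s₃ t₃) (nuv s₆ t₆) (nuv s₅ t₅) (nuv s₄ t₄)
      ⬝ᵥ nuv s₁ t₁
    = -((s₁*t₂-s₂*t₁)*(s₁*t₃-s₃*t₁)*(s₁*t₄-s₄*t₁)*(s₁*t₅-s₅*t₁)*(s₁*t₆-s₆*t₁)
        *(s₁*t₆-s₆*t₁)*(s₂*t₆-s₆*t₂)*(s₃*t₆-s₆*t₃)*(s₄*t₅-s₅*t₄)) := by
  rw [pascalVec, chX1, chX2,
      cross_cross (nuv s₁ t₁) (nuv s₅ t₅) (nuv s₂ t₂) (nuv s₆ t₆),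
      cross_cross (nuv s₁ t₁) (nuv s₄ t₄) (nuv s₃ t₃) (nuv s₆ t₆),
      expand_dot]
  simp only [triple_nu]
  ring

lemma dotL1D (s₁ t₁ s₂ t₂ s₃ t₃ s₄ t₄ s₅ t₅ s₆ t₆ : ℂ) :
    pascalVec (nuv s₁ t₁) (nuv s₂ t₂) (nuv s₃ t₃) (nuv s₆ t₆) (nuv s₅ t₅) (nuv s₄ t₄)
      ⬝ᵥ nuv s₄ t₄
    = (s₁*t₂-s₂*t₁)*(s₁*t₄-s₄*t₁)*(s₁*t₅-s₅*t₁)*(s₁*t₆-s₆*t₁)*(s₂*t₆-s₆*t₂)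
        *(s₃*t₄-s₄*t₃)*(s₃*t₆-s₆*t₃)*(s₄*t₅-s₅*t₄)*(s₄*t₆-s₆*t₄) := by
  rw [pascalVec, chX1, chX2,
      cross_cross (nuv s₁ t₁) (nuv s₅ t₅) (nuv s₂ t₂) (nuv s₆ t₆),
      cross_cross (nuv s₁ t₁) (nuv s₄ t₄) (nuv s₃ t₃) (nuv s₆ t₆),
      expand_dot]
  simp only [triple_nu]
  ring

lemma dotL2A (s₁ t₁ s₂ t₂ s₃ t₃ s₄ t₄ s₅ t₅ s₆ t₆ : ℂ) :
    pascalVec (nuv s₁ t₁) (nuv s₅ t₅) (nuv s₆ t₆) (nuv s₂ t₂) (nuv s₃ t₃) (nuv s₄ t₄)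
      ⬝ᵥ nuv s₁ t₁
    = (s₁*t₂-s₂*t₁)*(s₁*t₂-s₂*t₁)*(s₁*t₃-s₃*t₁)*(s₁*t₄-s₄*t₁)*(s₁*t₅-s₅*t₁)
        *(s₁*t₆-s₆*t₁)*(s₂*t₅-s₅*t₂)*(s₂*t₆-s₆*t₂)*(s₃*t₄-s₄*t₃) := by
  rw [pascalVec, chX1, chX2,
      cross_cross (nuv s₁ t₁) (nuv s₃ t₃) (nuv s₅ t₅) (nuv s₂ t₂),
      cross_cross (nuv s₁ t₁) (nuv s₄ t₄) (nuv s₆ t₆) (nuv s₂ t₂),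
      expand_dot]
  simp only [triple_nu]
  ring

lemma dotL2D (s₁ t₁ s₂ t₂ s₃ t₃ s₄ t₄ s₅ t₅ s₆ t₆ : ℂ) :
    pascalVec (nuv s₁ t₁) (nuv s₅ t₅) (nuv s₆ t₆) (nuv s₂ t₂) (nuv s₃ t₃) (nuv s₄ t₄)
      ⬝ᵥ nuv s₄ t₄
    = -((s₁*t₂-s₂*t₁)*(s₁*t₃-s₃*t₁)*(s₁*t₄-s₄*t₁)*(s₁*t₅-s₅*t₁)*(s₂*t₄-s₄*t₂)
        *(s₂*t₅-s₅*t₂)*(s₂*t₆-s₆*t₂)*(s₃*t₄-s₄*t₃)*(s₄*t₆-s₆*t₄)) := by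
  rw [pascalVec, chX1, chX2,
      cross_cross (nuv s₁ t₁) (nuv s₃ t₃) (nuv s₅ t₅) (nuv s₂ t₂),
      cross_cross (nuv s₁ t₁) (nuv s₄ t₄) (nuv s₆ t₆) (nuv s₂ t₂),
      expand_dot]
  simp only [triple_nu]
  ring

lemma combine (d12 d13 d14 d15 d16 d24 d25 d26 d34 d36 d45 d46 X : ℂ)
    (hpl : d13*d24 - d12*d34 = X) :
    (-(d12*d13*d14*d15*d16*d16*d26*d36*d45)) * (-(d12*d13*d14*d15*d24*d25*d26*d34*d46))
      - (d12*d14*d15*d16*d26*d34*d36*d45*d46) * (d12*d12*d13*d14*d15*d16*d25*d26*d34)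
    = d12*d12*d13*d14*d14*d15*d15*d16*d16*d25*d26*d26*d34*d36*d45*d46*X := by
  linear_combination (d12*d12*d13*d14*d14*d15*d15*d16*d16*d25*d26*d26*d34*d36*d45*d46) * hpl

lemma exists_param (y : Fin 3 → ℂ) (hy : OnK y) (h0 : y ≠ 0) :
    ∃ s t c : ℂ, c ≠ 0 ∧ c • y = nuv s t ∧ ¬(s = 0 ∧ t = 0) := by
  by_cases h : y 0 = 0
  · have h1 : y 1 = 0 := by
      have : y 1 ^ 2 = 0 := by rw [← hy, h, zero_mul]
      exact pow_eq_zero_iff (two_ne_zero) |>.mp this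
    have h2 : y 2 ≠ 0 := by
      intro h2
      exact h0 (funext fun i => by fin_cases i <;> simpa [h, h1, h2])
    refine ⟨0, y 2, y 2, h2, ?_, fun hc => h2 hc.2⟩
    funext i
    fin_cases i <;> simp [nuv, h, h1] <;> ring
  · refine ⟨y 0, y 1, y 0, h, ?_, fun hc => h hc.1⟩
    funext i
    fin_cases i
    · simp [nuv]; ring
    · simp [nuv]
    · simp [nuv]; exact hy

lemma d_ne_zero (P Q : Fin 3 → ℂ) (sP tP cP sQ tQ cQ : ℂ)
    (hcP : cP ≠ 0)
    (hP : cP • P = nuv sP tP) (hQ : cQ • Q = nuv sQ tQ)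
    (hQ0 : ¬(sQ = 0 ∧ tQ = 0))
    (hPQ : ∀ c : ℂ, P ≠ c • Q) :
    sP * tQ - sQ * tP ≠ 0 := by
  intro hd
  have key : ∃ k : ℂ, nuv sP tP = k • nuv sQ tQ := by
    by_cases hsQ : sQ = 0
    · have htQ : tQ ≠ 0 := fun h => hQ0 ⟨hsQ, h⟩
      have hsP : sP = 0 := by
        have h1 : sP * tQ = 0 := by linear_combination hd + tP * hsQ
        exact (mul_eq_zero.mp h1).resolve_right htQ
      refine ⟨(tP/tQ)^2, ?_⟩
      funext i
      fin_cases i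
      · simp [nuv, hsP, hsQ]
      · simp [nuv, hsP, hsQ]
      · simp [nuv]; field_simp
    · refine ⟨(sP/sQ)^2, ?_⟩
      funext i
      fin_cases i
      · simp [nuv]; field_simp
      · simp [nuv]; field_simp; linear_combination (-sP)*hd
      · simp [nuv]; field_simp; linear_combination (-(sP*tQ+sQ*tP))*hd
  obtain ⟨k, hk⟩ := key
  apply hPQ (cP⁻¹ * (k * cQ))
  calc P = cP⁻¹ • (cP • P) := by rw [smul_smul, inv_mul_cancel₀ hcP, one_smul]
  _ = cP⁻¹ • (k • (cQ • Q)) := by rw [hP, hk, hQ]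
  _ = (cP⁻¹ * (k * cQ)) • Q := by rw [smul_smul, smul_smul, mul_assoc]

theorem pascals_never_coincide_I8
    (A B C D E F : Fin 3 → ℂ)
    (hdist : PairwiseNonProp ![A, B, C, D, E, F])
    (hKA : OnK A) (hKB : OnK B) (hKC : OnK C)
    (hKD : OnK D) (hKE : OnK E) (hKF : OnK F) :
    pascalVec A B C F E D ⨯₃ pascalVec A E F B C D ≠ 0 := by
  intro H
  have hA0 : A ≠ 0 := by simpa using hdist 0 1 (by decide) 0
  have hB0 : B ≠ 0 := by simpa using hdist 1 0 (by decide) 0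
  have hC0 : C ≠ 0 := by simpa using hdist 2 0 (by decide) 0
  have hD0 : D ≠ 0 := by simpa using hdist 3 0 (by decide) 0
  have hE0 : E ≠ 0 := by simpa using hdist 4 0 (by decide) 0
  have hF0 : F ≠ 0 := by simpa using hdist 5 0 (by decide) 0
  obtain ⟨sA, tA, cA, hcA, hnA, hsA⟩ := exists_param A hKA hA0
  obtain ⟨sB, tB, cB, hcB, hnB, hsB⟩ := exists_param B hKB hB0
  obtain ⟨sC, tC, cC, hcC, hnC, hsC⟩ := exists_param C hKC hC0
  obtain ⟨sD, tD, cD, hcD, hnD, hsD⟩ := exists_param D hKD hD0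
  obtain ⟨sE, tE, cE, hcE, hnE, hsE⟩ := exists_param E hKE hE0
  obtain ⟨sF, tF, cF, hcF, hnF, hsF⟩ := exists_param F hKF hF0
  have hd12 : sA * tB - sB * tA ≠ 0 :=
    d_ne_zero A B sA tA cA sB tB cB hcA hnA hnB hsB
      (fun c => by simpa using hdist 0 1 (by decide) c)
  have hd13 : sA * tC - sC * tA ≠ 0 :=
    d_ne_zero A C sA tA cA sC tC cC hcA hnA hnC hsC
      (fun c => by simpa using hdist 0 2 (by decide) c)
  have hd14 : sA * tD - sD * tA ≠ 0 :=
    d_ne_zero A D sA tA cA sD tD cD hcA hnA hnD hsD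
      (fun c => by simpa using hdist 0 3 (by decide) c)
  have hd15 : sA * tE - sE * tA ≠ 0 :=
    d_ne_zero A E sA tA cA sE tE cE hcA hnA hnE hsE
      (fun c => by simpa using hdist 0 4 (by decide) c)
  have hd16 : sA * tF - sF * tA ≠ 0 :=
    d_ne_zero A F sA tA cA sF tF cF hcA hnA hnF hsF
      (fun c => by simpa using hdist 0 5 (by decide) c)
  have hd23 : sB * tC - sC * tB ≠ 0 :=
    d_ne_zero B C sB tB cB sC tC cC hcB hnB hnC hsC
      (fun c => by simpa using hdist 1 2 (by decide) c)
  have hd25 : sB * tE - sE * tB ≠ 0 :=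
    d_ne_zero B E sB tB cB sE tE cE hcB hnB hnE hsE
      (fun c => by simpa using hdist 1 4 (by decide) c)
  have hd26 : sB * tF - sF * tB ≠ 0 :=
    d_ne_zero B F sB tB cB sF tF cF hcB hnB hnF hsF
      (fun c => by simpa using hdist 1 5 (by decide) c)
  have hd34 : sC * tD - sD * tC ≠ 0 :=
    d_ne_zero C D sC tC cC sD tD cD hcC hnC hnD hsD
      (fun c => by simpa using hdist 2 3 (by decide) c)
  have hd36 : sC * tF - sF * tC ≠ 0 :=
    d_ne_zero C F sC tC cC sF tF cF hcC hnC hnF hsF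
      (fun c => by simpa using hdist 2 5 (by decide) c)
  have hd45 : sD * tE - sE * tD ≠ 0 :=
    d_ne_zero D E sD tD cD sE tE cE hcD hnD hnE hsE
      (fun c => by simpa using hdist 3 4 (by decide) c)
  have hd46 : sD * tF - sF * tD ≠ 0 :=
    d_ne_zero D F sD tD cD sF tF cF hcD hnD hnF hsF
      (fun c => by simpa using hdist 3 5 (by decide) c)
  -- scaling
  have e1 : pascalVec (nuv sA tA) (nuv sB tB) (nuv sC tC) (nuv sF tF) (nuv sE tE) (nuv sD tD)
      = (cA^2 * cB * cC * cF^2 * cE * cD) • pascalVec A B C F E D := by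
    rw [← hnA, ← hnB, ← hnC, ← hnD, ← hnE, ← hnF]
    exact pascal_smul cA cB cC cF cE cD A B C F E D
  have e2 : pascalVec (nuv sA tA) (nuv sE tE) (nuv sF tF) (nuv sB tB) (nuv sC tC) (nuv sD tD)
      = (cA^2 * cE * cF * cB^2 * cC * cD) • pascalVec A E F B C D := by
    rw [← hnA, ← hnB, ← hnC, ← hnD, ← hnE, ← hnF]
    exact pascal_smul cA cE cF cB cC cD A E F B C D
  have hVnu : pascalVec (nuv sA tA) (nuv sB tB) (nuv sC tC) (nuv sF tF) (nuv sE tE) (nuv sD tD)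
      ⨯₃ pascalVec (nuv sA tA) (nuv sE tE) (nuv sF tF) (nuv sB tB) (nuv sC tC) (nuv sD tD)
      = 0 := by
    rw [e1, e2, smul_crossL, smul_crossR, H, smul_zero, smul_zero]
  have h0 : (pascalVec (nuv sA tA) (nuv sB tB) (nuv sC tC) (nuv sF tF) (nuv sE tE) (nuv sD tD)
      ⨯₃ pascalVec (nuv sA tA) (nuv sE tE) (nuv sF tF) (nuv sB tB) (nuv sC tC) (nuv sD tD))
      ⬝ᵥ (nuv sA tA ⨯₃ nuv sD tD) = 0 := by
    rw [hVnu, zero_dotProduct]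
  have h1 := cross_dot_cross
    (pascalVec (nuv sA tA) (nuv sB tB) (nuv sC tC) (nuv sF tF) (nuv sE tE) (nuv sD tD))
    (pascalVec (nuv sA tA) (nuv sE tE) (nuv sF tF) (nuv sB tB) (nuv sC tC) (nuv sD tD))
    (nuv sA tA) (nuv sD tD)
  rw [h0] at h1
  rw [dotL1A sA tA sB tB sC tC sD tD sE tE sF tF,
      dotL1D sA tA sB tB sC tC sD tD sE tE sF tF,
      dotL2A sA tA sB tB sC tC sD tD sE tE sF tF,
      dotL2D sA tA sB tB sC tC sD tD sE tE sF tF] at h1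
  have hpl : (sA*tC-sC*tA)*(sB*tD-sD*tB) - (sA*tB-sB*tA)*(sC*tD-sD*tC)
      = (sA*tD-sD*tA)*(sB*tC-sC*tB) := by ring
  rw [combine (sA*tB-sB*tA) (sA*tC-sC*tA) (sA*tD-sD*tA) (sA*tE-sE*tA) (sA*tF-sF*tA)
      (sB*tD-sD*tB) (sB*tE-sE*tB) (sB*tF-sF*tB) (sC*tD-sD*tC) (sC*tF-sF*tC)
      (sD*tE-sE*tD) (sD*tF-sF*tD) _ hpl] at h1
  have hne : (sA*tB-sB*tA)*(sA*tB-sB*tA)*(sA*tC-sC*tA)*(sA*tD-sD*tA)*(sA*tD-sD*tA)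
      *(sA*tE-sE*tA)*(sA*tE-sE*tA)*(sA*tF-sF*tA)*(sA*tF-sF*tA)*(sB*tE-sE*tB)
      *(sB*tF-sF*tB)*(sB*tF-sF*tB)*(sC*tD-sD*tC)*(sC*tF-sF*tC)*(sD*tE-sE*tD)
      *(sD*tF-sF*tD)*((sA*tD-sD*tA)*(sB*tC-sC*tB)) ≠ 0 := by
    simp only [ne_eq, mul_eq_zero, not_or]
    tauto
  exact hne h1.symm


end

end PascalStmt
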